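/- Let a, s, ω ∈ ℂ with a ≠ 0, let n ∈ ℕ, and assume a ω q^m ≠ 1 for all integers m ≥ 0 and a s q^m ≠ 1 for all 0 ≤ m ≤ n−1. Then the n-th q-derivative with respect to a satisfies D_a^n{ (as;q)_∞/(aω;q)_∞ } = p_n(ω,s) · (as;q)_∞ / ((as;q)_n (aω;q)_∞); equivalently, when ω ≠ 0 the right-hand side equals ω^n ((s/ω;q)_n/(as;q)_n) · (as;q)_∞/(aω;q)_∞. -/

import Mathlib

noncomputable section

/-- The q-shifted factorial `(a;q)_n`. -/
def qPoch (q a : ℂ) (n : ℕ) : ℂ := ∏ j ∈ Finset.range n, (1 - a * q ^ j)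

/-- The infinite q-shifted factorial `(a;q)_∞`. -/
def qPochInf (q a : ℂ) : ℂ := ∏' j : ℕ, (1 - a * q ^ j)

/-- The q-binomial coefficient `[n k]_q`. -/
def qBinom (q : ℂ) (n k : ℕ) : ℂ := qPoch q q n / (qPoch q q k * qPoch q q (n - k))

/-- The Cauchy polynomials `p_n(x,y)`. -/
def cauchyP (q x y : ℂ) (n : ℕ) : ℂ := ∏ j ∈ Finset.range n, (x - q ^ j * y)

/-- The generalized q-binomial coefficient `[α k]_{-q}`. -/
def genQBinom (q α : ℂ) (k : ℕ) : ℂ :=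
  qPoch q (-(q ^ (-α))) k / qPoch q (-q) k * q ^ (α * (k : ℂ) - (k.choose 2 : ℂ))

/-- The generalized q-polynomials `L̃_n^{(r,s)}(α,x,y,z,a)`. -/
def Ltil (q : ℂ) (r s : ℤ) (α x y z a : ℂ) (n : ℕ) : ℂ :=
  ∑ k ∈ Finset.range (n + 1),
    qBinom q n k * genQBinom q α k *
      q ^ (r * (k.choose 2 : ℤ) - s * ((k + 1).choose 2 : ℤ) + (k.choose 2 : ℤ)) *
      qPoch q a k * cauchyP q x y (n - k) * z ^ k

/-- The basic hypergeometric series `₂Φ₁[a,b;c;q;z]`. -/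
def Phi21 (q a b c z : ℂ) : ℂ :=
  ∑' n : ℕ, qPoch q a n * qPoch q b n / (qPoch q c n * qPoch q q n) * z ^ n

/-- The basic hypergeometric series `₄Φ₃`. -/
def Phi43 (q a₁ a₂ a₃ a₄ b₁ b₂ b₃ z : ℂ) : ℂ :=
  ∑' n : ℕ, qPoch q a₁ n * qPoch q a₂ n * qPoch q a₃ n * qPoch q a₄ n /
    (qPoch q b₁ n * qPoch q b₂ n * qPoch q b₃ n * qPoch q q n) * z ^ n

/-- The trivariate q-polynomials `F_n(x,y,z;q)`. -/
def Ftri (q x y z : ℂ) (n : ℕ) : ℂ :=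
  (-1) ^ n * q ^ (-(n.choose 2 : ℤ)) *
    ∑ k ∈ Finset.range (n + 1),
      qBinom q n k * q ^ (k.choose 2) * (-z) ^ k * cauchyP q y x (n - k)

/-- The Hahn (Al-Salam–Carlitz) polynomials `φ_n^{(σ)}(x|q)`. -/
def hahnPhi (q σ x : ℂ) (n : ℕ) : ℂ :=
  ∑ k ∈ Finset.range (n + 1), qBinom q n k * qPoch q σ k * x ^ k

/-- The q-derivative operator `D_a`. -/
def Dq (q : ℂ) (f : ℂ → ℂ) : ℂ → ℂ := fun a => (f a - f (q * a)) / a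

/-- The homogeneous q-difference operator `D_{xy}`. -/
def Dxy (q : ℂ) (f : ℂ → ℂ → ℂ) : ℂ → ℂ → ℂ :=
  fun x y => (f x (y / q) - f (q * x) y) / (x - y / q)


/-!
With `u = a s` and `v = a ω`, the functional equation `(x;q)_∞ = (1 - x) (qx;q)_∞` shows that
`(u;q)_∞ / ((u;q)_n (v;q)_∞)` minus its value at `(qu, qv)` is `(v - u q^n)` times the same
expression with `n + 1`. Since `v - u q^n = a (ω - q^n s)`, one more application of `D_a`
contributes exactly the next factor of `p_{n+1}(ω, s)`, and the formula follows by induction on `n`,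
for all admissible `a` at once.
-/

lemma multipliable_one_sub_mul_pow {q : ℂ} (hq : ‖q‖ < 1) (x : ℂ) :
    Multipliable fun j : ℕ => 1 - x * q ^ j := by
  simpa [sub_eq_add_neg] using multipliable_one_add_of_summable (f := fun j : ℕ => -(x * q ^ j))
    (by simpa using (summable_geometric_of_lt_one (norm_nonneg q) hq).mul_left ‖x‖)

lemma qPochInf_eq_one_sub_mul {q : ℂ} (hq : ‖q‖ < 1) (x : ℂ) :
    qPochInf q x = (1 - x) * qPochInf q (q * x) := by
  have hshift : (fun j : ℕ => 1 - x * q ^ (j + 1)) = fun j => 1 - q * x * q ^ j := by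
    funext j; ring
  rw [qPochInf, qPochInf, tprod_eq_zero_mul' (hshift ▸ multipliable_one_sub_mul_pow hq (q * x)),
    hshift, pow_zero, mul_one]

lemma qPoch_succ (q x : ℂ) (n : ℕ) : qPoch q x (n + 1) = qPoch q x n * (1 - x * q ^ n) :=
  Finset.prod_range_succ _ _

lemma qPoch_succ' (q x : ℂ) (n : ℕ) : qPoch q x (n + 1) = (1 - x) * qPoch q (q * x) n := by
  rw [qPoch, qPoch, Finset.prod_range_succ', pow_zero, mul_one, mul_comm]
  exact congrArg _ (Finset.prod_congr rfl fun j _ => by ring)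

lemma qPoch_ne_zero {q x : ℂ} {n : ℕ} (h : ∀ m < n, x * q ^ m ≠ 1) : qPoch q x n ≠ 0 :=
  Finset.prod_ne_zero_iff.mpr fun m hm => sub_ne_zero.mpr (h m (Finset.mem_range.mp hm)).symm

lemma cauchyP_succ (q x y : ℂ) (n : ℕ) :
    cauchyP q x y (n + 1) = cauchyP q x y n * (x - q ^ n * y) :=
  Finset.prod_range_succ _ _

lemma cauchyP_eq_pow_mul_qPoch (q : ℂ) {x : ℂ} (hx : x ≠ 0) (y : ℂ) (n : ℕ) :
    cauchyP q x y n = x ^ n * qPoch q (y / x) n := by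
  have hfactor (j : ℕ) : x - q ^ j * y = x * (1 - y / x * q ^ j) := by field_simp
  simp only [cauchyP, qPoch, hfactor, Finset.prod_mul_distrib, Finset.prod_const, Finset.card_range]

lemma qPochInf_div_sub_qPochInf_div {q : ℂ} (hq : ‖q‖ < 1) {u v : ℂ} {n : ℕ}
    (hu : qPoch q u (n + 1) ≠ 0) (hv : v ≠ 1) :
    qPochInf q u / (qPoch q u n * qPochInf q v) -
        qPochInf q (q * u) / (qPoch q (q * u) n * qPochInf q (q * v)) =
      (v - u * q ^ n) * qPochInf q u / (qPoch q u (n + 1) * qPochInf q v) := by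
  have hsucc := (qPoch_succ' q u n).symm.trans (qPoch_succ q u n)
  have hu₀ : 1 - u ≠ 0 := left_ne_zero_of_mul (qPoch_succ' q u n ▸ hu)
  have hqu : qPoch q (q * u) n ≠ 0 := right_ne_zero_of_mul (qPoch_succ' q u n ▸ hu)
  have hun : qPoch q u n ≠ 0 := left_ne_zero_of_mul (qPoch_succ q u n ▸ hu)
  have hun' : 1 - u * q ^ n ≠ 0 := right_ne_zero_of_mul (qPoch_succ q u n ▸ hu)
  have hv₀ : 1 - v ≠ 0 := sub_ne_zero.mpr hv.symm
  rw [qPochInf_eq_one_sub_mul hq u, qPochInf_eq_one_sub_mul hq v, qPoch_succ]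
  generalize qPochInf q (q * u) = P, qPochInf q (q * v) = P', qPoch q u n = Q,
    qPoch q (q * u) n = Q' at *
  by_cases hP' : P' = 0
  · simp [hP']
  field_simp
  linear_combination P * (1 - v) * hsucc

theorem iterate_Dq_qPochInf_div {q : ℂ} (hq₀ : q ≠ 0) (hq : ‖q‖ < 1) (s ω : ℂ) (n : ℕ) {a : ℂ}
    (ha : a ≠ 0) (hs : qPoch q (a * s) n ≠ 0) (hω : qPoch q (a * ω) n ≠ 0) :
    (Dq q)^[n] (fun b => qPochInf q (b * s) / qPochInf q (b * ω)) a =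
      cauchyP q ω s n * (qPochInf q (a * s) / (qPoch q (a * s) n * qPochInf q (a * ω))) := by
  induction n generalizing a with
  | zero => simp [cauchyP, qPoch]
  | succ n ih =>
    have hs' := qPoch_succ' q (a * s) n ▸ hs
    have hω' := qPoch_succ' q (a * ω) n ▸ hω
    have h_at_a := ih ha (left_ne_zero_of_mul (qPoch_succ q _ n ▸ hs))
      (left_ne_zero_of_mul (qPoch_succ q _ n ▸ hω))
    have h_at_qa := ih (mul_ne_zero hq₀ ha) (by rw [mul_assoc]; exact right_ne_zero_of_mul hs')
      (by rw [mul_assoc]; exact right_ne_zero_of_mul hω')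
    have hω₀ : a * ω ≠ 1 := fun h => left_ne_zero_of_mul hω' (sub_eq_zero.mpr h.symm)
    rw [Function.iterate_succ_apply', Dq, h_at_a, h_at_qa, mul_assoc q a s, mul_assoc q a ω,
      ← mul_sub, qPochInf_div_sub_qPochInf_div hq hs hω₀, cauchyP_succ]
    field_simp

/-- Action of the iterated q-derivative on `(as;q)_∞/(aω;q)_∞`. -/
theorem stmt4 (q : ℂ) (hq0 : q ≠ 0) (hq1 : ‖q‖ < 1) (a s ω : ℂ) (n : ℕ) (ha : a ≠ 0)
    (hω : ∀ m : ℕ, a * ω * q ^ m ≠ 1) (hs : ∀ m : ℕ, m < n → a * s * q ^ m ≠ 1) :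
    ((Dq q)^[n] (fun b => qPochInf q (b * s) / qPochInf q (b * ω))) a =
      cauchyP q ω s n * qPochInf q (a * s) / (qPoch q (a * s) n * qPochInf q (a * ω)) ∧
    (ω ≠ 0 →
      cauchyP q ω s n * qPochInf q (a * s) / (qPoch q (a * s) n * qPochInf q (a * ω)) =
        ω ^ n * (qPoch q (s / ω) n / qPoch q (a * s) n) *
          (qPochInf q (a * s) / qPochInf q (a * ω))) := by
  refine ⟨?_, fun hω₀ => ?_⟩
  · rw [mul_div_assoc]
    exact iterate_Dq_qPochInf_div hq0 hq1 s ω n ha (qPoch_ne_zero hs)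
      (qPoch_ne_zero fun m _ => hω m)
  · rw [cauchyP_eq_pow_mul_qPoch q hω₀]
    ring

end
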